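/- Let d ≥ 1 and p ≥ 1. There exists a constant C(d) > 0 such that for every sufficiently small δ > 0 and every u ∈ L^p(𝕋^d), there exists x₀ ∈ 𝕋^d with ∫_{𝕋^d} |u(x)|^p dx ≤ (1 + C(d)δ) ∫_{[-1/2+3δ, 1/2-3δ]^d} |u(x + x₀)|^p dx. -/

import Mathlib

/-!
Average over all translations. For a `ℤ^d`-periodic `g ≥ 0` and `S ⊆ [-1/2, 1/2)^d`, Tonelli
and the translation invariance of `∫_{𝕋^d} g` give
`∫_{x₀ ∈ 𝕋^d} ∫_S g(x + x₀) dx dx₀ = |S| ∫_{𝕋^d} g`,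
so some translate `x₀` does at least as well as the average. For `S = [-1/2+3δ, 1/2-3δ]^d`
the loss factor is `|S|⁻¹ = (1 - 6δ)⁻ᵈ ≤ 1 + Cδ`.
-/

open MeasureTheory

/-- The fundamental domain `[-1/2, 1/2]^d` of the torus `𝕋^d = (ℝ/ℤ)^d` inside `ℝ^d`. -/
def cube (d : ℕ) : Set (EuclideanSpace ℝ (Fin d)) :=
  {x | ∀ i, x i ∈ Set.Icc (-(1 : ℝ)/2) (1/2)}

/-- The lattice point `m ∈ ℤ^d` viewed as a vector of `ℝ^d`. -/
noncomputable def zval (d : ℕ) (m : Fin d → ℤ) : EuclideanSpace ℝ (Fin d) :=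
  (EuclideanSpace.equiv (Fin d) ℝ).symm fun i => (m i : ℝ)

open Set Submodule
open scoped ENNReal Pointwise

namespace MeasureTheory.IsAddFundamentalDomain

section Measurability

variable {α : Type*} [MeasurableSpace α] {μ : Measure α} {L : Type*} [AddGroup L]
  [AddAction L α] [MeasurableConstVAdd L α] [VAddInvariantMeasure L α μ] [Countable L]
  {F : Set α}

theorem aestronglyMeasurable_of_vadd_invariant {β : Type*} [TopologicalSpace β]
    [TopologicalSpace.PseudoMetrizableSpace β] (hF : IsAddFundamentalDomain L F μ) {f : α → β}
    (hf : ∀ (l : L) x, f (l +ᵥ x) = f x) (hfF : AEStronglyMeasurable f (μ.restrict F)) :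
    AEStronglyMeasurable f μ := by
  rw [← hF.sum_restrict]
  exact aestronglyMeasurable_sum_measure_iff.2 fun l =>
    ((hF.vadd l).aestronglyMeasurable_on_iff hF hf).2 hfF

end Measurability

section Averaging

variable {E : Type*} [AddCommGroup E] [MeasurableSpace E] [MeasurableAdd₂ E]
  {μ : Measure E} [μ.IsAddLeftInvariant] {L : Type*} [AddGroup L] [AddAction L E]
  [VAddCommClass E L E] [MeasurableConstVAdd L E] [VAddInvariantMeasure L E μ] [Countable L]
  {F : Set E}

theorem setLIntegral_comp_add_left (hF : IsAddFundamentalDomain L F μ) {f : E → ℝ≥0∞}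
    (hf : ∀ (l : L) x, f (l +ᵥ x) = f x) (x : E) :
    ∫⁻ v in F, f (x + v) ∂μ = ∫⁻ v in F, f v ∂μ := by
  rw [(measurePreserving_add_left μ x).setLIntegral_comp_emb
    (measurableEmbedding_addLeft x) f F]
  exact (hF.vadd_of_comm x).setLIntegral_eq hF f hf

variable [SFinite μ]

theorem lintegral_setLIntegral_comp_add (hF : IsAddFundamentalDomain L F μ) {f : E → ℝ≥0∞}
    (hf : ∀ (l : L) x, f (l +ᵥ x) = f x) (hfm : AEMeasurable f μ) (S : Set E) :
    ∫⁻ v in F, ∫⁻ x in S, f (x + v) ∂μ ∂μ = μ S * ∫⁻ v in F, f v ∂μ := by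
  have hprod : AEMeasurable (Function.uncurry fun v x => f (x + v))
      ((μ.restrict F).prod (μ.restrict S)) :=
    (hfm.comp_quasiMeasurePreserving (quasiMeasurePreserving_add_swap μ μ)).mono_ac
      (Measure.restrict_le_self.absolutelyContinuous.prod
        Measure.restrict_le_self.absolutelyContinuous)
  rw [lintegral_lintegral_swap hprod]
  simp_rw [hF.setLIntegral_comp_add_left hf]
  rw [setLIntegral_const, mul_comm]

theorem exists_measure_mul_setLIntegral_le (hF : IsAddFundamentalDomain L F μ) (hμF : μ F = 1)
    {f : E → ℝ≥0∞} (hf : ∀ (l : L) x, f (l +ᵥ x) = f x) (hfm : AEMeasurable f μ)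
    (hfF : ∫⁻ x in F, f x ∂μ ≠ ∞) {S : Set E} (hS : μ S ≠ ∞) :
    ∃ v, μ S * ∫⁻ x in F, f x ∂μ ≤ ∫⁻ x in S, f (x + v) ∂μ := by
  have : IsProbabilityMeasure (μ.restrict F) := ⟨by rwa [Measure.restrict_apply_univ]⟩
  rw [← hF.lintegral_setLIntegral_comp_add hf hfm S]
  exact exists_lintegral_le (by
    rw [hF.lintegral_setLIntegral_comp_add hf hfm S]
    exact ENNReal.mul_ne_top hS hfF)

theorem exists_measureReal_mul_setIntegral_le (hF : IsAddFundamentalDomain L F μ)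
    (hμF : μ F = 1) {g : E → ℝ} (hg : ∀ x, 0 ≤ g x) (hg_inv : ∀ (l : L) x, g (l +ᵥ x) = g x)
    (hgF : IntegrableOn g F μ) {S : Set E} (hSF : S ⊆ F) :
    ∃ v, μ.real S * ∫ x in F, g x ∂μ ≤ ∫ x in S, g (x + v) ∂μ := by
  have hgm : AEStronglyMeasurable g μ :=
    hF.aestronglyMeasurable_of_vadd_invariant hg_inv hgF.aestronglyMeasurable
  set f : E → ℝ≥0∞ := fun x => ENNReal.ofReal (g x)
  have hf_inv : ∀ (l : L) x, f (l +ᵥ x) = f x := fun l x => by simp only [f, hg_inv]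
  have hfF : ∫⁻ x in F, f x ∂μ = ENNReal.ofReal (∫ x in F, g x ∂μ) :=
    (ofReal_integral_eq_lintegral_ofReal hgF (.of_forall hg)).symm
  obtain ⟨v, hv⟩ := hF.exists_measure_mul_setLIntegral_le hμF hf_inv
    hgm.aemeasurable.ennreal_ofReal (hfF ▸ ENNReal.ofReal_ne_top)
    (measure_ne_top_of_subset hSF (by simp [hμF]))
  -- `S ⊆ F` keeps the right-hand side finite, so passing to `toReal` loses nothing.
  have hfin : ∫⁻ x in S, f (x + v) ∂μ ≠ ∞ := by
    refine ne_top_of_le_ne_top ?_ (lintegral_mono_set hSF)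
    simp_rw [add_comm _ v]
    rw [hF.setLIntegral_comp_add_left hf_inv, hfF]
    exact ENNReal.ofReal_ne_top
  refine ⟨v, ?_⟩
  rw [integral_eq_lintegral_of_nonneg_ae (f := fun x => g (x + v))
      (.of_forall fun x => hg (x + v))
      ((hgm.comp_measurePreserving (measurePreserving_add_right μ v)).restrict),
    integral_eq_lintegral_of_nonneg_ae (.of_forall hg) hgF.aestronglyMeasurable,
    measureReal_def, ← ENNReal.toReal_mul]
  exact ENNReal.toReal_mono hfin hv

end Averaging

end MeasureTheory.IsAddFundamentalDomain

def coordBox (ι : Type*) (I : Set ℝ) : Set (EuclideanSpace ℝ ι) := {x | ∀ i, x i ∈ I}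

abbrev intLattice (ι : Type*) [Fintype ι] : AddSubgroup (EuclideanSpace ℝ ι) :=
  (span ℤ (range (EuclideanSpace.basisFun ι ℝ).toBasis)).toAddSubgroup

instance (ι : Type*) [Fintype ι] : Countable (intLattice ι) :=
  inferInstanceAs (Countable (span ℤ _))

theorem coordBox_eq_preimage (ι : Type*) (I : Set ℝ) :
    coordBox ι I = WithLp.ofLp ⁻¹' univ.pi fun _ => I := by
  ext x; simp [coordBox]

section coordBox

variable {ι : Type*} [Fintype ι]

theorem volume_coordBox {I : Set ℝ} (hI : MeasurableSet I) :
    volume (coordBox ι I) = volume I ^ Fintype.card ι := by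
  rw [coordBox_eq_preimage, (PiLp.volume_preserving_ofLp ι).measure_preimage
    (MeasurableSet.univ_pi fun _ => hI).nullMeasurableSet, volume_pi, Measure.pi_pi,
    Finset.prod_const, Finset.card_univ]

theorem measureReal_coordBox_Icc {a b : ℝ} (hab : a ≤ b) :
    volume.real (coordBox ι (Icc a b)) = (b - a) ^ Fintype.card ι := by
  rw [measureReal_def, volume_coordBox measurableSet_Icc, Real.volume_Icc, ENNReal.toReal_pow,
    ENNReal.toReal_ofReal (sub_nonneg.2 hab)]

theorem coordBox_ae_eq {I J : Set ℝ} (h : I =ᵐ[volume] J) :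
    coordBox ι I =ᵐ[volume] coordBox ι J := by
  simp only [coordBox_eq_preimage]
  exact (PiLp.volume_preserving_ofLp ι).quasiMeasurePreserving.preimage_ae_eq
    (Measure.ae_eq_set_pi fun _ _ => h)

theorem isAddFundamentalDomain_coordBox_Ico (a : ℝ) :
    IsAddFundamentalDomain (intLattice ι) (coordBox ι (Ico a (a + 1))) := by
  have h : coordBox ι (Ico a (a + 1)) = WithLp.toLp 2 (fun _ : ι => a) +ᵥ
      ZSpan.fundamentalDomain (EuclideanSpace.basisFun ι ℝ).toBasis := by
    ext x
    simp [coordBox, mem_vadd_set_iff_neg_vadd_mem, ZSpan.mem_fundamentalDomain]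
  rw [h]
  exact (ZSpan.isAddFundamentalDomain' _ volume).vadd_of_comm _

end coordBox

theorem apply_intLattice_vadd_of_periodic {α : Type*} {d : ℕ}
    {u : EuclideanSpace ℝ (Fin d) → α} (hu : ∀ x m, u (x + zval d m) = u x)
    (l : intLattice (Fin d)) (x : EuclideanSpace ℝ (Fin d)) : u (l +ᵥ x) = u x := by
  obtain ⟨m, hm⟩ : ∃ m, zval d m = l := by
    choose m hm using ((EuclideanSpace.basisFun (Fin d) ℝ).toBasis.mem_span_iff_repr_mem ℤ
      (l : EuclideanSpace ℝ (Fin d))).1 l.2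
    exact ⟨m, by ext i; simpa [zval] using hm i⟩
  rw [AddSubgroup.vadd_def, vadd_eq_add, ← hm, add_comm, hu]

theorem one_le_one_add_mul_mul_one_sub_pow (d : ℕ) {δ : ℝ} (hδ : 0 ≤ δ)
    (hδ₀ : 12 * (d + 1) * δ ≤ 1) : 1 ≤ (1 + 12 * (d + 1) * δ) * (1 - 6 * δ) ^ d := by
  have hd : (0 : ℝ) ≤ d := d.cast_nonneg
  have hbern : 1 + d * (-(6 * δ)) ≤ (1 + -(6 * δ)) ^ d :=
    one_add_mul_le_pow (by nlinarith) d
  have h6 : 1 - 6 * d * δ ≤ (1 - 6 * δ) ^ d := by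
    convert hbern using 1 <;> ring
  nlinarith [mul_nonneg hd hδ, mul_nonneg (mul_nonneg hd hδ) hδ]

theorem stmt5_general (d : ℕ) (p : ℝ) :
    ∃ C > (0 : ℝ), ∃ δ₀ > (0 : ℝ), ∀ δ : ℝ, 0 < δ → δ ≤ δ₀ →
      ∀ u : EuclideanSpace ℝ (Fin d) → ℂ,
        (∀ (x : EuclideanSpace ℝ (Fin d)) (m : Fin d → ℤ), u (x + zval d m) = u x) →
        IntegrableOn (fun x => ‖u x‖ ^ p) (cube d) →
        ∃ x₀ : EuclideanSpace ℝ (Fin d),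
          (∫ x in cube d, ‖u x‖ ^ p) ≤
            (1 + C * δ) *
              ∫ x in {x : EuclideanSpace ℝ (Fin d) |
                  ∀ i, x i ∈ Set.Icc (-(1 : ℝ)/2 + 3 * δ) (1/2 - 3 * δ)},
                ‖u (x + x₀)‖ ^ p := by
  refine ⟨12 * (d + 1), by positivity, 1 / (12 * (d + 1)), by positivity,
    fun δ hδ hδδ₀ u hu hu_int => ?_⟩
  have hδ' : 12 * (d + 1) * δ ≤ 1 := by rwa [le_div_iff₀' (by positivity)] at hδδ₀
  have hδ6 : 6 * δ ≤ 1 := by linarith [mul_nonneg d.cast_nonneg hδ.le]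
  have hQ := isAddFundamentalDomain_coordBox_Ico (ι := Fin d) (-(1 : ℝ) / 2)
  rw [show -(1 : ℝ) / 2 + 1 = 1 / 2 by norm_num] at hQ
  set Q := coordBox (Fin d) (Ico (-(1 : ℝ) / 2) (1 / 2))
  have hcube : cube d =ᵐ[volume] Q := coordBox_ae_eq Ico_ae_eq_Icc.symm
  have hvolQ : volume Q = 1 := by
    rw [volume_coordBox measurableSet_Ico, Real.volume_Ico]
    norm_num
  have hSQ : coordBox (Fin d) (Icc (-(1 : ℝ) / 2 + 3 * δ) (1 / 2 - 3 * δ)) ⊆ Q :=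
    fun x hx i => ⟨by linarith [(hx i).1], by linarith [(hx i).2]⟩
  obtain ⟨x₀, hx₀⟩ :=
    hQ.exists_measureReal_mul_setIntegral_le hvolQ (fun x => by positivity)
    (apply_intLattice_vadd_of_periodic fun x m => by rw [hu]) (hu_int.congr_set_ae hcube.symm) hSQ
  rw [measureReal_coordBox_Icc (by linarith), Fintype.card_fin,
    show 1 / 2 - 3 * δ - (-(1 : ℝ) / 2 + 3 * δ) = 1 - 6 * δ by ring] at hx₀
  refine ⟨x₀, ?_⟩
  rw [setIntegral_congr_set hcube]
  calc ∫ x in Q, ‖u x‖ ^ p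
      ≤ (1 + 12 * (d + 1) * δ) * ((1 - 6 * δ) ^ d * ∫ x in Q, ‖u x‖ ^ p) := by
        rw [← mul_assoc]
        exact le_mul_of_one_le_left (integral_nonneg fun x => by positivity)
          (one_le_one_add_mul_mul_one_sub_pow d hδ.le hδ')
    _ ≤ _ := by gcongr; exact hx₀

/-- For `d ≥ 1` and `p ≥ 1` there is `C(d) > 0` such that for every sufficiently small
`δ > 0` and every `u ∈ L^p(𝕋^d)` (a `ℤ^d`-periodic function on `ℝ^d`), there is a
translation `x₀` with
`∫_{𝕋^d} |u|^p ≤ (1 + C(d)δ) ∫_{[-1/2+3δ,1/2-3δ]^d} |u(x+x₀)|^p dx`. -/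
theorem stmt5 (d : ℕ) (hd : 0 < d) (p : ℝ) (hp : 1 ≤ p) :
    ∃ C > (0 : ℝ), ∃ δ₀ > (0 : ℝ), ∀ δ : ℝ, 0 < δ → δ ≤ δ₀ →
      ∀ u : EuclideanSpace ℝ (Fin d) → ℂ,
        (∀ (x : EuclideanSpace ℝ (Fin d)) (m : Fin d → ℤ), u (x + zval d m) = u x) →
        IntegrableOn (fun x => ‖u x‖ ^ p) (cube d) →
        ∃ x₀ : EuclideanSpace ℝ (Fin d),
          (∫ x in cube d, ‖u x‖ ^ p) ≤
            (1 + C * δ) *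
              ∫ x in {x : EuclideanSpace ℝ (Fin d) |
                  ∀ i, x i ∈ Set.Icc (-(1 : ℝ)/2 + 3 * δ) (1/2 - 3 * δ)},
                ‖u (x + x₀)‖ ^ p :=
  stmt5_general d p
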